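/- Let S ⊂ ℝ be a compact set with convex hull I = [a,b], and let φ : S → ℝ have bounded variation on S. Define the extension φ̃ : ℝ → ℝ by: φ̃ = φ on S; on each bounded open component (c,d) of I∖S (so c, d ∈ S), φ̃ is the linear interpolation between φ(c) and φ(d); φ̃(x) := lim_{t→a, t∈S} φ(t) for x < a; and φ̃(x) := lim_{t→b, t∈S} φ(t) for x > b (these one-sided limits exist since φ has bounded variation). Then V(φ̃, ℝ) = V(φ, S). -/

import Mathlib

open MeasureTheory Metric Complex Polynomial Filter Topology Asymptotics
open scoped Classical ENNReal

noncomputable section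

/-- The support of a Borel measure on `ℝ`: points all of whose neighborhoods have
positive measure. -/
def msupport (μ : Measure ℝ) : Set ℝ := {x : ℝ | ∀ ε > 0, 0 < μ (Metric.ball x ε)}

/-- A subset of `ℝ` viewed as a subset of `ℂ`. -/
def cemb (S : Set ℝ) : Set ℂ := (fun x : ℝ => (x : ℂ)) '' S

/-- Weak-star convergence of a sequence of measures on `ℂ`, tested against continuous
compactly supported functions. -/
def WeakStarTendsTo (ν : ℕ → Measure ℂ) (μ : Measure ℂ) : Prop :=
  ∀ f : ℂ → ℝ, Continuous f → HasCompactSupport f →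
    Tendsto (fun n => ∫ z, f z ∂(ν n)) atTop (𝓝 (∫ z, f z ∂μ))

/-- The logarithmic kernel `log (1/|z-w|)`. -/
def logKernel (z w : ℂ) : ℝ := Real.log (1 / ‖z - w‖)

/-- The logarithmic potential of a measure on `ℂ`. -/
def logPotential (μ : Measure ℂ) (z : ℂ) : ℝ := ∫ w, logKernel z w ∂μ

/-- A compactly supported measure has finite logarithmic energy iff the kernel is
integrable for the product measure. -/
def HasFiniteLogEnergy (μ : Measure ℂ) : Prop :=
  Integrable (fun p : ℂ × ℂ => logKernel p.1 p.2) (μ.prod μ)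

/-- The logarithmic energy `I[μ] = ∬ log (1/|z-w|) dμ dμ`. -/
def logEnergy (μ : Measure ℂ) : ℝ := ∫ p : ℂ × ℂ, logKernel p.1 p.2 ∂(μ.prod μ)

/-- A probability measure carried by the set `E`. -/
def IsProbOn (μ : Measure ℂ) (E : Set ℂ) : Prop :=
  IsProbabilityMeasure μ ∧ μ Eᶜ = 0

/-- `μ` is the (logarithmic) equilibrium measure of `E`: a probability measure on `E` of
finite energy minimizing the logarithmic energy. -/
def IsEquilibriumMeasure (E : Set ℂ) (μ : Measure ℂ) : Prop :=
  IsProbOn μ E ∧ HasFiniteLogEnergy μ ∧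
    ∀ ν : Measure ℂ, IsProbOn ν E → HasFiniteLogEnergy ν → logEnergy μ ≤ logEnergy ν

/-- Logarithmic capacity of a compact set: `exp(-inf I[μ])`, the infimum over probability
measures on the set (`0` if the set is polar). -/
def capCompact (K : Set ℂ) : ℝ :=
  sSup ((fun μ : Measure ℂ => Real.exp (-logEnergy μ)) ''
    {μ : Measure ℂ | IsProbOn μ K ∧ HasFiniteLogEnergy μ})

/-- Logarithmic capacity of an arbitrary set: supremum of the capacities of its
compact subsets. -/
def cap (E : Set ℂ) : ℝ :=
  sSup (capCompact '' {K : Set ℂ | IsCompact K ∧ K ⊆ E})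

/-- Harmonicity on an open set via the mean value property. -/
def HarmonicOnMV (h : ℂ → ℝ) (U : Set ℂ) : Prop :=
  ContinuousOn h U ∧ ∀ z r, 0 < r → Metric.closedBall z r ⊆ U →
    h z = (2 * Real.pi)⁻¹ *
      ∫ θ in (0:ℝ)..(2 * Real.pi), h (z + (r : ℂ) * Complex.exp ((θ : ℂ) * Complex.I))

/-- The complex measure `dλ = e^{iφ} dμ` belongs to the class `M`. -/
structure ClassM (μ : Measure ℝ) (φ : ℝ → ℝ) : Prop where
  finite : IsFiniteMeasure μ
  compact_supp : IsCompact (msupport μ)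
  infinite_supp : (msupport μ).Infinite
  meas : Measurable φ
  bv : BoundedVariationOn φ (msupport μ)
  regular : ∃ ν : Measure ℂ, IsEquilibriumMeasure (cemb (msupport μ)) ν ∧
      Continuous (logPotential ν)
  density : ∃ c > (0:ℝ), ∃ L > (0:ℝ), ∀ x ∈ msupport μ, ∀ δ : ℝ, δ ∈ Set.Ioo (0:ℝ) 1 →
      ENNReal.ofReal (c * δ ^ L) ≤ μ (Set.Icc (x - δ) (x + δ))

/-- The monic polynomial `z ↦ ∏ (z - ζ j)`, as a function. -/
def vfun {k : ℕ} (ζ : Fin k → ℂ) (z : ℂ) : ℂ := ∏ j, (z - ζ j)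

/-- Normalized counting measure of a finite family of points. -/
def countMeas {k : ℕ} (ζ : Fin k → ℂ) : Measure ℂ :=
  ((k : ℝ≥0∞))⁻¹ • ∑ j, Measure.dirac (ζ j)

/-- Counting measure of the roots of a polynomial (with multiplicity), normalized by `1/n`. -/
def rootMeasure (n : ℕ) (q : Polynomial ℂ) : Measure ℂ :=
  ((n : ℝ≥0∞))⁻¹ • (q.roots.map Measure.dirac).sum

/-- Denominator of the reduced form of the rational function `p/q`. -/
def redDenom (p q : Polynomial ℂ) : Polynomial ℂ := q / EuclideanDomain.gcd p q

/-- Numerator of the reduced form of the rational function `p/q`. -/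
def redNum (p q : Polynomial ℂ) : Polynomial ℂ := p / EuclideanDomain.gcd p q

/-- Value at `z` of the rational function `p/q`. -/
def ratEval (p q : Polynomial ℂ) (z : ℂ) : ℂ := (redNum p q).eval z / (redDenom p q).eval z

/-- Counting measure of the poles (with multiplicity) of the rational function `p/q`,
normalized by `1/n`. -/
def poleMeasure (n : ℕ) (p q : Polynomial ℂ) : Measure ℂ := rootMeasure n (redDenom p q)

/-- The Cauchy transform of `e^{iφ} dμ` plus the rational function `P/Q`. -/
def Fmeas (μ : Measure ℝ) (φ : ℝ → ℝ) (P Q : Polynomial ℂ) (z : ℂ) : ℂ :=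
  (∫ t, Complex.exp (Complex.I * (φ t : ℂ)) / (z - (t : ℂ)) ∂μ) + P.eval z / Q.eval z

/-- The Cauchy transform of `ρ dμ` plus the rational function `P/Q`. -/
def Fdens (μ : Measure ℝ) (ρ : ℝ → ℂ) (P Q : Polynomial ℂ) (z : ℂ) : ℂ :=
  (∫ t, ρ t / (z - (t : ℂ)) ∂μ) + P.eval z / Q.eval z

/-- `(p, q)` is a multipoint Padé pair of order `n` for `F` (holomorphic on `Ω`) with
interpolation polynomial `v`:  `deg p ≤ n`, `deg q ≤ n`, `q ≠ 0`, `(qF - p)/v` extends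
holomorphically to `Ω`, and the extension is `O(1/z^{n+1})` at infinity. -/
def IsPadePair (F : ℂ → ℂ) (Ω : Set ℂ) (n : ℕ) (v : ℂ → ℂ) (p q : Polynomial ℂ) : Prop :=
  p.natDegree ≤ n ∧ q.natDegree ≤ n ∧ q ≠ 0 ∧
  ∃ g : ℂ → ℂ, DifferentiableOn ℂ g Ω ∧
    (∀ z ∈ Ω, v z ≠ 0 → g z = (q.eval z * F z - p.eval z) / v z) ∧
    g =O[Bornology.cobounded ℂ] fun z => (z ^ (n + 1))⁻¹

/-- Principal branch of the argument, with the convention `A(0) = π`. -/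
def argA (z : ℂ) : ℝ := if z = 0 then Real.pi else Complex.arg z

/-- The angle in which the interval `[a,b]` is seen at `ξ`. -/
def ang (ξ : ℂ) (a b : ℝ) : ℝ := |argA ((a : ℂ) - ξ) - argA ((b : ℂ) - ξ)|

/-- The angle function of a system of intervals. -/
def theta {m : ℕ} (a b : Fin m → ℝ) (ξ : ℂ) : ℝ := ∑ j, ang ξ (a j) (b j)

/-- An admissible interpolation scheme: points `ζ n` lie in a compact set `K₀` disjoint
from `Ih`, normalized counting measures converge weak-star to a probability measure `σ`
of finite logarithmic energy, and the derivatives of `v_{2n}/|v_{2n}|` are uniformly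
bounded on `Ih`. -/
structure Admissible (K₀ : Set ℂ) (Ih : Set ℝ) (ζ : ∀ n : ℕ, Fin (2 * n) → ℂ)
    (σ : Measure ℂ) : Prop where
  compact : IsCompact K₀
  disjI : ∀ x ∈ Ih, (x : ℂ) ∉ K₀
  mem : ∀ n j, ζ n j ∈ K₀
  prob : IsProbabilityMeasure σ
  energy : HasFiniteLogEnergy σ
  wstar : WeakStarTendsTo (fun n => countMeas (ζ n)) σ
  deriv_bound : ∃ C : ℝ, ∀ n, ∀ x ∈ Ih,
    ‖deriv (fun y : ℝ => vfun (ζ n) (y : ℂ) / ((‖vfun (ζ n) (y : ℂ)‖ : ℝ) : ℂ)) x‖ ≤ C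

/-- A uniform bound `V_A` on the variation of continuous branches of the argument of
`v_{2n}` on `Ih`. -/
def VarBound (Ih : Set ℝ) (ζ : ∀ n : ℕ, Fin (2 * n) → ℂ) (VA : ℝ) : Prop :=
  ∀ n, ∃ ψ : ℝ → ℝ, ContinuousOn ψ Ih ∧
    (∀ x ∈ Ih, vfun (ζ n) (x : ℂ)
      = ((‖vfun (ζ n) (x : ℂ)‖ : ℝ) : ℂ) * Complex.exp (Complex.I * (ψ x : ℂ))) ∧
    (eVariationOn ψ Ih).toReal ≤ VA

/-- The orthogonality relation `∫ t^k Q_s(t) q_n(t) / v_{2n}(t) dλ(t) = 0` for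
`dλ = e^{iφ} dμ`. -/
def OrthRel (μ : Measure ℝ) (φ : ℝ → ℝ) (Q : Polynomial ℂ) {k2 : ℕ} (ζ : Fin k2 → ℂ)
    (qn : Polynomial ℂ) (k : ℕ) : Prop :=
  ∫ t, (t : ℂ) ^ k * Q.eval (t : ℂ) * qn.eval (t : ℂ) / vfun ζ (t : ℂ)
      * Complex.exp (Complex.I * (φ t : ℂ)) ∂μ = 0

/-- The upper characteristic `m̄(z)` of a sequence of (multi)sets of poles. -/
def upperChar (poles : ℕ → Multiset ℂ) (z : ℂ) : ℕ∞ :=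
  ⨅ (U : Set ℂ) (_ : IsOpen U) (_ : z ∈ U),
    Filter.limsup (fun n => ((Multiset.filter (fun w => w ∈ U) (poles n)).card : ℕ∞))
      Filter.atTop

/-- Subharmonicity on an open set for `[-∞,∞)`-valued functions: upper semicontinuous,
not identically `-∞` on any connected component, and satisfying the sub-mean value
inequality (tested against integrable majorants of the values on circles). -/
def SubharmonicOn (u : ℂ → EReal) (D : Set ℂ) : Prop :=
  UpperSemicontinuousOn u D ∧
  (∀ z ∈ D, u z ≠ ⊤) ∧
  (∀ z ∈ D, ∃ w ∈ connectedComponentIn D z, u w ≠ ⊥) ∧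
  ∀ z r, 0 < r → Metric.closedBall z r ⊆ D →
    ∀ g : ℝ → ℝ, IntervalIntegrable g MeasureTheory.volume 0 (2 * Real.pi) →
      (∀ θ ∈ Set.Icc (0:ℝ) (2 * Real.pi),
        u (z + (r : ℂ) * Complex.exp ((θ : ℂ) * Complex.I)) ≤ (g θ : EReal)) →
      u z ≤ (((2 * Real.pi)⁻¹ * ∫ θ in (0:ℝ)..(2 * Real.pi), g θ : ℝ) : EReal)

end

/-- The extension `φ̃` of `φ : S → ℝ` to `ℝ`: equal to `φ` on `S`, linear on the bounded
components of `I ∖ S`, and constant (with the boundary values) off `I = [inf S, sup S]`. -/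
noncomputable def extBV (S : Set ℝ) (φ : ℝ → ℝ) (x : ℝ) : ℝ :=
  if x ∈ S then φ x
  else if x < sInf S then φ (sInf S)
  else if sSup S < x then φ (sSup S)
  else
    φ (sSup (S ∩ Set.Iic x)) +
      (φ (sInf (S ∩ Set.Ici x)) - φ (sSup (S ∩ Set.Iic x))) * (x - sSup (S ∩ Set.Iic x)) /
        (sInf (S ∩ Set.Ici x) - sSup (S ∩ Set.Iic x))

/-! On each gap of `S` the extension interpolates linearly, hence the extension of a function
monotone on `S` is monotone on `ℝ`, and its range stays between the values at `inf S` and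
`sup S`. Writing `φ = p - q` with `p, q` monotone on `S` and `V(φ, S) = Δp + Δq` (Jordan
decomposition), and using that extension is linear, `V(φ̃) ≤ V(p̃) + V(q̃) ≤ Δp + Δq = V(φ, S)`.
The reverse inequality holds because `φ̃ = φ` on `S`. -/

open Set

theorem eVariationOn_sub_le {α E : Type*} [LinearOrder α] [SeminormedAddCommGroup E]
    (f g : α → E) (s : Set α) :
    eVariationOn (f - g) s ≤ eVariationOn f s + eVariationOn g s := by
  refine iSup_le fun ⟨n, u, hu, us⟩ => ?_
  calc ∑ i ∈ Finset.range n, edist ((f - g) (u (i + 1))) ((f - g) (u i))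
      ≤ ∑ i ∈ Finset.range n,
          (edist (f (u (i + 1))) (f (u i)) + edist (g (u (i + 1))) (g (u i))) :=
        Finset.sum_le_sum fun i _ => edist_vsub_vsub_le _ _ _ _
    _ ≤ eVariationOn f s + eVariationOn g s := by
        rw [Finset.sum_add_distrib]
        exact add_le_add (eVariationOn.sum_le hu us) (eVariationOn.sum_le hu us)

theorem MonotoneOn.eVariationOn_le_of_mapsTo {α : Type*} [LinearOrder α] {f : α → ℝ}
    {s : Set α} (hf : MonotoneOn f s) {A B : ℝ} (hAB : MapsTo f s (Icc A B)) :
    eVariationOn f s ≤ ENNReal.ofReal (B - A) := by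
  rw [eVariationOn.eq_biSup_inter_Icc]
  refine iSup₂_le fun ⟨x, y⟩ ⟨hx, hy, _⟩ => ?_
  rw [hf.eVariationOn_eq hx hy]
  exact ENNReal.ofReal_le_ofReal (sub_le_sub (hAB hy).2 (hAB hx).1)

theorem BoundedVariationOn.eVariationOn_eq_variationOnFromTo_sInf_sSup {f : ℝ → ℝ}
    {S : Set ℝ} (hS : Bornology.IsBounded S) (hf : BoundedVariationOn f S) :
    eVariationOn f S = ENNReal.ofReal (variationOnFromTo f S (sInf S) (sSup S)) := by
  have hsub : S ⊆ Icc (sInf S) (sSup S) := fun z hz =>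
    ⟨csInf_le hS.bddBelow hz, le_csSup hS.bddAbove hz⟩
  rw [variationOnFromTo.eq_of_le _ _ (Real.sInf_le_sSup S hS.bddBelow hS.bddAbove),
    inter_eq_self_of_subset_left hsub, ENNReal.ofReal_toReal hf]

theorem monotone_add_mul_sub_div {u v c d : ℝ} (huv : u ≤ v) (hcd : c < d) :
    Monotone fun t : ℝ => u + (v - u) * (t - c) / (d - c) := by
  intro s t hst
  have hvu : 0 ≤ v - u := sub_nonneg.2 huv
  have hdc : 0 < d - c := sub_pos.2 hcd
  dsimp only
  gcongr

theorem IsCompact.exists_gap_of_notMem {S : Set ℝ} (hS : IsCompact S) {a b x : ℝ}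
    (ha : a ∈ S) (hb : b ∈ S) (hx : x ∈ Icc a b) (hxS : x ∉ S) :
    ∃ c ∈ S, ∃ d ∈ S, x ∈ Ioo c d ∧ ∀ z ∈ S, z ∉ Ioo c d := by
  obtain ⟨c, ⟨hcS, hcx⟩, hcmax⟩ := (hS.inter_right isClosed_Iic).exists_isGreatest ⟨a, ha, hx.1⟩
  obtain ⟨d, ⟨hdS, hxd⟩, hdmin⟩ := (hS.inter_right isClosed_Ici).exists_isLeast ⟨b, hb, hx.2⟩
  refine ⟨c, hcS, d, hdS, ⟨hcx.lt_of_ne ?_, hxd.lt_of_ne' ?_⟩, fun z hz hzcd => ?_⟩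
  · rintro rfl; exact hxS hcS
  · rintro rfl; exact hxS hdS
  rcases le_total z x with hzx | hxz
  · exact (hcmax ⟨hz, hzx⟩).not_gt hzcd.1
  · exact (hdmin ⟨hz, hxz⟩).not_gt hzcd.2

section extBV

variable {S : Set ℝ} {m : ℝ → ℝ} {x : ℝ}

theorem extBV_sub (S : Set ℝ) (f g : ℝ → ℝ) : extBV S (f - g) = extBV S f - extBV S g := by
  funext x
  simp only [extBV, Pi.sub_apply]
  split_ifs <;> ring

theorem extBV_of_mem (hx : x ∈ S) : extBV S m x = m x := if_pos hx

theorem extBV_of_lt_sInf (hS : BddBelow S) (hx : x < sInf S) : extBV S m x = m (sInf S) := by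
  have hxS : x ∉ S := fun h => (csInf_le hS h).not_gt hx
  simp only [extBV, if_neg hxS, if_pos hx]

theorem extBV_of_sSup_lt (hS : Bornology.IsBounded S) (hx : sSup S < x) :
    extBV S m x = m (sSup S) := by
  have hxS : x ∉ S := fun h => (le_csSup hS.bddAbove h).not_gt hx
  have hxa : ¬ x < sInf S :=
    ((Real.sInf_le_sSup S hS.bddBelow hS.bddAbove).trans hx.le).not_gt
  simp only [extBV, if_neg hxS, if_neg hxa, if_pos hx]

theorem extBV_of_mem_gap (hS : Bornology.IsBounded S) {c d : ℝ} (hc : c ∈ S) (hd : d ∈ S)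
    (hgap : ∀ z ∈ S, z ∉ Ioo c d) (hx : x ∈ Ioo c d) :
    extBV S m x = m c + (m d - m c) * (x - c) / (d - c) := by
  have hxS : x ∉ S := fun h => hgap x h hx
  have hxa : ¬ x < sInf S := ((csInf_le hS.bddBelow hc).trans hx.1.le).not_gt
  have hbx : ¬ sSup S < x := (hx.2.le.trans (le_csSup hS.bddAbove hd)).not_gt
  have hsup : sSup (S ∩ Iic x) = c := by
    refine IsGreatest.csSup_eq ⟨⟨hc, hx.1.le⟩, fun z ⟨hz, hzx⟩ => ?_⟩
    by_contra! hcz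
    exact hgap z hz ⟨hcz, hzx.trans_lt hx.2⟩
  have hinf : sInf (S ∩ Ici x) = d := by
    refine IsLeast.csInf_eq ⟨⟨hd, hx.2.le⟩, fun z ⟨hz, hxz⟩ => ?_⟩
    by_contra! hzd
    exact hgap z hz ⟨hx.1.trans_le hxz, hzd⟩
  simp only [extBV, if_neg hxS, if_neg hxa, if_neg hbx, hsup, hinf]

theorem extBV_le_of_le_mem (hS : IsCompact S) (hm : MonotoneOn m S)
    {z : ℝ} (hz : z ∈ S) (hxz : x ≤ z) : extBV S m x ≤ m z := by
  have ha := hS.sInf_mem ⟨z, hz⟩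
  have hb := hS.sSup_mem ⟨z, hz⟩
  by_cases hxS : x ∈ S
  · rw [extBV_of_mem hxS]; exact hm hxS hz hxz
  rcases lt_or_ge x (sInf S) with hxa | hax
  · rw [extBV_of_lt_sInf hS.bddBelow hxa]; exact hm ha hz (csInf_le hS.bddBelow hz)
  obtain ⟨c, hc, d, hd, hxcd, hgap⟩ :=
    hS.exists_gap_of_notMem ha hb ⟨hax, hxz.trans (le_csSup hS.bddAbove hz)⟩ hxS
  have hcd : c < d := hxcd.1.trans hxcd.2
  have hdz : d ≤ z := not_lt.1 fun h => hgap z hz ⟨hxcd.1.trans_le hxz, h⟩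
  rw [extBV_of_mem_gap hS.isBounded hc hd hgap hxcd]
  calc _ ≤ m c + (m d - m c) * (d - c) / (d - c) :=
        monotone_add_mul_sub_div (hm hc hd hcd.le) hcd hxcd.2.le
    _ = m d := by field_simp [sub_ne_zero.2 hcd.ne']; ring
    _ ≤ m z := hm hd hz hdz

theorem le_extBV_of_mem_le (hS : IsCompact S) (hm : MonotoneOn m S)
    {z : ℝ} (hz : z ∈ S) (hzx : z ≤ x) : m z ≤ extBV S m x := by
  have ha := hS.sInf_mem ⟨z, hz⟩
  have hb := hS.sSup_mem ⟨z, hz⟩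
  by_cases hxS : x ∈ S
  · rw [extBV_of_mem hxS]; exact hm hz hxS hzx
  rcases lt_or_ge (sSup S) x with hbx | hxb
  · rw [extBV_of_sSup_lt hS.isBounded hbx]; exact hm hz hb (le_csSup hS.bddAbove hz)
  obtain ⟨c, hc, d, hd, hxcd, hgap⟩ :=
    hS.exists_gap_of_notMem ha hb ⟨(csInf_le hS.bddBelow hz).trans hzx, hxb⟩ hxS
  have hcd : c < d := hxcd.1.trans hxcd.2
  have hzc : z ≤ c := not_lt.1 fun h => hgap z hz ⟨h, hzx.trans_lt hxcd.2⟩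
  rw [extBV_of_mem_gap hS.isBounded hc hd hgap hxcd]
  calc m z ≤ m c := hm hz hc hzc
    _ = m c + (m d - m c) * (c - c) / (d - c) := by simp
    _ ≤ _ := monotone_add_mul_sub_div (hm hc hd hcd.le) hcd hxcd.1.le

theorem extBV_mem_Icc (hS : IsCompact S) (hm : MonotoneOn m S) (hne : S.Nonempty) (x : ℝ) :
    extBV S m x ∈ Icc (m (sInf S)) (m (sSup S)) := by
  constructor
  · rcases lt_or_ge x (sInf S) with h | h
    · exact (extBV_of_lt_sInf hS.bddBelow h).ge
    · exact le_extBV_of_mem_le hS hm (hS.sInf_mem hne) h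
  · rcases lt_or_ge (sSup S) x with h | h
    · exact (extBV_of_sSup_lt hS.isBounded h).le
    · exact extBV_le_of_le_mem hS hm (hS.sSup_mem hne) h

theorem extBV_monotone (hS : IsCompact S) (hm : MonotoneOn m S) (hne : S.Nonempty) : Monotone (extBV S m) := by
  intro x y hxy
  by_cases hmid : ∃ z ∈ S, x ≤ z ∧ z ≤ y
  · obtain ⟨z, hz, hxz, hzy⟩ := hmid
    exact (extBV_le_of_le_mem hS hm hz hxz).trans (le_extBV_of_mem_le hS hm hz hzy)
  push Not at hmid
  have ha := hS.sInf_mem hne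
  have hb := hS.sSup_mem hne
  rcases lt_or_ge x (sInf S) with hxa | hax
  · rw [extBV_of_lt_sInf hS.bddBelow hxa, extBV_of_lt_sInf hS.bddBelow (hmid _ ha hxa.le)]
  rcases lt_or_ge (sSup S) x with hbx | hxb
  · rw [extBV_of_sSup_lt hS.isBounded hbx, extBV_of_sSup_lt hS.isBounded (hbx.trans_le hxy)]
  have hxS : x ∉ S := fun h => (hmid x h le_rfl).not_ge hxy
  obtain ⟨c, hc, d, hd, hxcd, hgap⟩ := hS.exists_gap_of_notMem ha hb ⟨hax, hxb⟩ hxS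
  have hcd : c < d := hxcd.1.trans hxcd.2
  have hycd : y ∈ Ioo c d := ⟨hxcd.1.trans_le hxy, hmid d hd hxcd.2.le⟩
  rw [extBV_of_mem_gap hS.isBounded hc hd hgap hxcd, extBV_of_mem_gap hS.isBounded hc hd hgap hycd]
  exact monotone_add_mul_sub_div (hm hc hd hcd.le) hcd hxy

theorem eVariationOn_extBV_le (hS : IsCompact S) (hm : MonotoneOn m S) (hne : S.Nonempty) :
    eVariationOn (extBV S m) univ ≤ ENNReal.ofReal (m (sSup S) - m (sInf S)) :=
  ((extBV_monotone hS hm hne).monotoneOn univ).eVariationOn_le_of_mapsTo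
    fun x _ => extBV_mem_Icc hS hm hne x

end extBV

/-- The canonical extension `φ̃` of a function `φ` of bounded variation
on a compact set `S ⊂ ℝ` satisfies `V(φ̃, ℝ) = V(φ, S)`. -/
theorem stmt16
    (S : Set ℝ) (hSc : IsCompact S) (hSne : S.Nonempty)
    (φ : ℝ → ℝ) (hφ : BoundedVariationOn φ S) :
    eVariationOn (extBV S φ) Set.univ = eVariationOn φ S := by
  obtain ⟨p, q, hp, hq, rfl, hpq⟩ :=
    hφ.locallyBoundedVariationOn.exists_monotoneOn_sub_monotoneOn'
  have ha := hSc.sInf_mem hSne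
  have hb := hSc.sSup_mem hSne
  have hab := Real.sInf_le_sSup S hSc.bddBelow hSc.bddAbove
  refine le_antisymm ?_ ?_
  · calc eVariationOn (extBV S (p - q)) univ
        ≤ eVariationOn (extBV S p) univ + eVariationOn (extBV S q) univ :=
          extBV_sub S p q ▸ eVariationOn_sub_le _ _ _
      _ ≤ ENNReal.ofReal (p (sSup S) - p (sInf S)) + ENNReal.ofReal (q (sSup S) - q (sInf S)) :=
          add_le_add (eVariationOn_extBV_le hSc hp hSne) (eVariationOn_extBV_le hSc hq hSne)
      _ = eVariationOn (p - q) S := by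
          rw [← ENNReal.ofReal_add (sub_nonneg.2 (hp ha hb hab)) (sub_nonneg.2 (hq ha hb hab)),
            hpq _ ha _ hb, hφ.eVariationOn_eq_variationOnFromTo_sInf_sSup hSc.isBounded]
  · calc eVariationOn (p - q) S = eVariationOn (extBV S (p - q)) S :=
          eVariationOn.eq_of_eqOn fun _ hx => (extBV_of_mem hx).symm
      _ ≤ eVariationOn (extBV S (p - q)) univ := eVariationOn.mono _ (subset_univ S)
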